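/- Let P > 0 and let h ∈ H^2((-1,1)) be an even function with h(±1) = 1, h ≥ 0, such that on the open set {h > 0} the distributional third derivative of h vanishes, and h ∈ C^2 near ±1 with ∂_x^2 h(±1) = P. Then h = h_P, where h_P is the steady state: h_P(x) = (P/2)(x^2-1)+1 if P ∈ (0,2], and h_P(x) = (P/2)(|x|-x_P)_+^2 with x_P = 1 - sqrt(2/P) if P > 2. -/

import Mathlib

/-!
Wherever `h > 0`, `h` is locally a quadratic polynomial, hence real analytic, so by the identity
theorem it is a single quadratic on each interval of positivity. Let `t` be the largest zero of
`h` in `[-1, 1]`. If there is none, `h` is one even quadratic with `h(1) = 1` and `h'' = P`, and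
`h(0) ≥ 0` forces `P ≤ 2`. Otherwise `0 ≤ t < 1` by evenness, and `h'(t) = 0` because `t` is an
interior minimum of `h ≥ 0`, so `h = (P/2)(x - t)²` on `[t, 1]` and `h(1) = 1` gives
`t = 1 - √(2/P)`. Finally `h` vanishes on `[-t, t]`: a positive excursion
`(u, v)` there would be a quadratic with double roots at `u` and `v`, hence zero.
-/

open Set Filter Topology

def quad (a b c : ℝ) : ℝ → ℝ := fun y => a * y ^ 2 + b * y + c

theorem hasDerivAt_quad (a b c x : ℝ) : HasDerivAt (quad a b c) (2 * a * x + b) x := by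
  have := (((hasDerivAt_pow 2 x).const_mul a).add ((hasDerivAt_id x).const_mul b)).add_const c
  exact this.congr_deriv (by simp; ring)

theorem deriv_quad (a b c : ℝ) : deriv (quad a b c) = fun x => 2 * a * x + b :=
  funext fun x => (hasDerivAt_quad a b c x).deriv

theorem iteratedDeriv_two_quad (a b c x : ℝ) : iteratedDeriv 2 (quad a b c) x = 2 * a := by
  rw [iteratedDeriv_succ, iteratedDeriv_one, deriv_quad]
  exact (((hasDerivAt_id x).const_mul (2 * a)).add_const b).deriv.trans (mul_one _)

theorem analyticAt_quad (a b c x : ℝ) : AnalyticAt ℝ (quad a b c) x := by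
  unfold quad; fun_prop

theorem quad_eq_mul_sq_of_root {a b c t : ℝ} (h0 : quad a b c t = 0) (hd : 2 * a * t + b = 0)
    (y : ℝ) : quad a b c y = a * (y - t) ^ 2 := by
  unfold quad at *
  linear_combination h0 + (y - t) * hd

theorem quad_eq_zero_of_two_critical_points {a b c u v : ℝ} (huv : u ≠ v)
    (h0 : quad a b c u = 0) (hu : 2 * a * u + b = 0) (hv : 2 * a * v + b = 0) (y : ℝ) :
    quad a b c y = 0 := by
  have ha : a = 0 := by
    have : 2 * a * (u - v) = 0 := by linear_combination hu - hv
    simpa [sub_eq_zero, huv] using this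
  rw [quad_eq_mul_sq_of_root h0 hu, ha, zero_mul]

/-- Local form of the hypothesis `h''' = 0` on `{h > 0}`. -/
def IsLocallyQuadraticAt (h : ℝ → ℝ) (x : ℝ) : Prop :=
  ∃ a b c, h =ᶠ[𝓝 x] quad a b c

theorem isLocallyQuadraticAt_of_forall_Ioo {h : ℝ → ℝ} {x : ℝ}
    (H : ∃ ε > 0, ∃ a b c : ℝ, ∀ y ∈ Ioo (x - ε) (x + ε), h y = a * y ^ 2 + b * y + c) :
    IsLocallyQuadraticAt h x := by
  obtain ⟨ε, hε, a, b, c, hq⟩ := H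
  refine ⟨a, b, c, eventually_of_mem (Metric.ball_mem_nhds x hε) fun y hy => hq y ?_⟩
  rwa [← Real.ball_eq_Ioo]

theorem IsLocallyQuadraticAt.analyticAt {h : ℝ → ℝ} {x : ℝ}
    (hh : IsLocallyQuadraticAt h x) : AnalyticAt ℝ h x := by
  obtain ⟨a, b, c, hq⟩ := hh
  exact (analyticAt_quad a b c x).congr hq.symm

theorem IsPreconnected.exists_eqOn_quad {h : ℝ → ℝ} {s : Set ℝ} (hs : IsPreconnected s)
    (hne : s.Nonempty) (hloc : ∀ x ∈ s, IsLocallyQuadraticAt h x) :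
    ∃ a b c, EqOn h (quad a b c) s := by
  obtain ⟨x₀, hx₀⟩ := hne
  obtain ⟨a, b, c, hq⟩ := hloc x₀ hx₀
  exact ⟨a, b, c, AnalyticOnNhd.eqOn_of_preconnected_of_eventuallyEq
    (fun x hx => (hloc x hx).analyticAt) (fun x _ => analyticAt_quad a b c x) hs hx₀ hq⟩

theorem exists_eqOn_quad_Icc {h : ℝ → ℝ} {u v : ℝ} (huv : u < v)
    (hcont : ContinuousOn h (Icc u v)) (hloc : ∀ x ∈ Ioo u v, IsLocallyQuadraticAt h x) :
    ∃ a b c, EqOn h (quad a b c) (Icc u v) := by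
  obtain ⟨a, b, c, hq⟩ := isPreconnected_Ioo.exists_eqOn_quad (nonempty_Ioo.2 huv) hloc
  have hqc : ContinuousOn (quad a b c) (Icc u v) := by unfold quad; fun_prop
  exact ⟨a, b, c, hq.of_subset_closure hcont hqc Ioo_subset_Icc_self (closure_Ioo huv.ne).ge⟩

theorem deriv_eq_of_eqOn_quad {h : ℝ → ℝ} {a b c u v x : ℝ} (huv : u < v)
    (hq : EqOn h (quad a b c) (Icc u v)) (hx : x ∈ Icc u v) (hd : DifferentiableAt ℝ h x) :
    deriv h x = 2 * a * x + b := by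
  have hu : UniqueDiffWithinAt ℝ (Icc u v) x := uniqueDiffOn_Icc huv x hx
  rw [← hd.derivWithin hu, derivWithin_congr hq (hq hx),
    (hasDerivAt_quad a b c x).differentiableAt.derivWithin hu, deriv_quad]

theorem iteratedDerivWithin_two_Icc_eq_of_eqOn_quad {h : ℝ → ℝ} {a b c t v δ : ℝ}
    (hδ : 0 < δ) (htv : t < v) (hq : EqOn h (quad a b c) (Icc t v)) :
    iteratedDerivWithin 2 h (Icc (v - δ) v) v = 2 * a := by
  have hv : v ∈ Icc (v - δ) v := ⟨by linarith, le_rfl⟩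
  have hev : h =ᶠ[𝓝[Icc (v - δ) v] v] quad a b c := by
    filter_upwards [self_mem_nhdsWithin, nhdsWithin_le_nhds (Ioi_mem_nhds htv)] with y hy hty
    exact hq ⟨le_of_lt hty, hy.2⟩
  rw [hev.iteratedDerivWithin_eq (hev.eq_of_nhdsWithin hv),
    iteratedDerivWithin_eq_iteratedDeriv (uniqueDiffOn_Icc (by linarith))
      (by unfold quad; fun_prop) hv, iteratedDeriv_two_quad]

theorem IsClosed.exists_Ioo_subset_compl {Z : Set ℝ} (hZ : IsClosed Z) {a b x : ℝ}
    (ha : a ∈ Z) (hax : a ≤ x) (hb : b ∈ Z) (hxb : x ≤ b) (hx : x ∉ Z) :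
    ∃ u v, u ∈ Z ∧ v ∈ Z ∧ x ∈ Ioo u v ∧ Ioo u v ⊆ Zᶜ := by
  have hbdd₁ : BddAbove (Z ∩ Iic x) := ⟨x, fun y hy => hy.2⟩
  have hbdd₂ : BddBelow (Z ∩ Ici x) := ⟨x, fun y hy => hy.2⟩
  obtain ⟨huZ, hux⟩ := (hZ.inter isClosed_Iic).csSup_mem ⟨a, ha, hax⟩ hbdd₁
  obtain ⟨hvZ, hvx⟩ := (hZ.inter isClosed_Ici).csInf_mem ⟨b, hb, hxb⟩ hbdd₂
  refine ⟨_, _, huZ, hvZ, ⟨lt_of_le_of_ne hux ?_, lt_of_le_of_ne hvx ?_⟩, fun y hy hyZ => ?_⟩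
  · exact fun hux => hx (hux ▸ huZ)
  · exact fun hvx => hx (hvx ▸ hvZ)
  rcases le_total y x with hyx | hxy
  · exact hy.1.not_ge (le_csSup hbdd₁ ⟨hyZ, hyx⟩)
  · exact hy.2.not_ge (csInf_le hbdd₂ ⟨hyZ, hxy⟩)

theorem two_mul_add_eq_zero_of_eqOn_quad {h : ℝ → ℝ} {U : Set ℝ} (hU : IsOpen U)
    (hnn : ∀ x ∈ U, 0 ≤ h x) (hdiff : DifferentiableOn ℝ h U) {a b c u v w : ℝ} (huv : u < v)
    (hq : EqOn h (quad a b c) (Icc u v)) (hw : w ∈ Icc u v) (hwU : w ∈ U) (hw0 : h w = 0) :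
    2 * a * w + b = 0 := by
  have hmin : IsLocalMin h w :=
    eventually_of_mem (hU.mem_nhds hwU) fun y hy => hw0 ▸ hnn y hy
  rw [← deriv_eq_of_eqOn_quad huv hq hw (hdiff.differentiableAt (hU.mem_nhds hwU))]
  exact hmin.deriv_eq_zero

theorem eqOn_zero_Icc_of_eq_zero {h : ℝ → ℝ} {U : Set ℝ} (hU : IsOpen U)
    (hnn : ∀ x ∈ U, 0 ≤ h x) (hdiff : DifferentiableOn ℝ h U)
    (hloc : ∀ x ∈ U, 0 < h x → IsLocallyQuadraticAt h x) {u v : ℝ} (hsub : Icc u v ⊆ U)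
    (hu : h u = 0) (hv : h v = 0) : EqOn h 0 (Icc u v) := by
  intro x hx
  by_contra hx0
  have hcont : ContinuousOn h (Icc u v) := (hdiff.continuousOn).mono hsub
  obtain ⟨u', v', hu', hv', hx', hgap⟩ :=
    (hcont.preimage_isClosed_of_isClosed isClosed_Icc isClosed_singleton).exists_Ioo_subset_compl
      ⟨⟨le_rfl, hx.1.trans hx.2⟩, hu⟩ hx.1 ⟨⟨hx.1.trans hx.2, le_rfl⟩, hv⟩ hx.2
      (fun hxZ => hx0 hxZ.2)
  have hsub' : Icc u' v' ⊆ Icc u v := Icc_subset_Icc hu'.1.1 hv'.1.2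
  have huv' : u' < v' := hx'.1.trans hx'.2
  have hpos : ∀ y ∈ Ioo u' v', 0 < h y := fun y hy =>
    (hnn y (hsub (hsub' (Ioo_subset_Icc_self hy)))).lt_of_ne
      fun hy0 => hgap hy ⟨hsub' (Ioo_subset_Icc_self hy), hy0.symm⟩
  obtain ⟨a, b, c, hq⟩ := exists_eqOn_quad_Icc huv' (hcont.mono hsub')
    fun y hy => hloc y (hsub (hsub' (Ioo_subset_Icc_self hy))) (hpos y hy)
  have hcrit : ∀ w ∈ Icc u' v', h w = 0 → 2 * a * w + b = 0 := fun w hw =>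
    two_mul_add_eq_zero_of_eqOn_quad hU hnn hdiff huv' hq hw (hsub (hsub' hw))
  have hu'Icc : u' ∈ Icc u' v' := left_mem_Icc.2 huv'.le
  have hv'Icc : v' ∈ Icc u' v' := right_mem_Icc.2 huv'.le
  refine hx0 ((hq (Ioo_subset_Icc_self hx')).trans ?_)
  exact quad_eq_zero_of_two_critical_points huv'.ne ((hq hu'Icc).symm.trans hu'.2)
    (hcrit u' hu'Icc hu'.2) (hcrit v' hv'Icc hv'.2) x

noncomputable def steadyState (P : ℝ) : ℝ → ℝ := fun x =>
  if P ≤ 2 then P / 2 * (x ^ 2 - 1) + 1 else P / 2 * (max (|x| - (1 - √(2 / P))) 0) ^ 2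

theorem steadyState_neg (P x : ℝ) : steadyState P (-x) = steadyState P x := by
  simp only [steadyState, neg_sq, abs_neg]

theorem steadyState_of_two_le {P : ℝ} (hP : 2 ≤ P) {x : ℝ} (hx : 0 ≤ x) :
    steadyState P x = P / 2 * (max (x - (1 - √(2 / P))) 0) ^ 2 := by
  rcases hP.lt_or_eq with hP | rfl
  · simp [steadyState, hP.not_ge, abs_of_nonneg hx]
  · norm_num [steadyState, hx]

theorem EqOn.Icc_neg_of_even {f g : ℝ → ℝ} {r : ℝ} (hf : ∀ x, f (-x) = f x)
    (hg : ∀ x, g (-x) = g x) (H : EqOn f g (Icc 0 r)) : EqOn f g (Icc (-r) r) := by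
  intro x hx
  rcases le_total 0 x with hx0 | hx0
  · exact H ⟨hx0, hx.2⟩
  · rw [← hf, ← hg]
    exact H ⟨neg_nonneg.2 hx0, by linarith [hx.1]⟩

theorem eqOn_steadyState_of_eqOn_quad {P a b c : ℝ} {h : ℝ → ℝ} (heven : ∀ x, h (-x) = h x)
    (h1 : h 1 = 1) (hq : EqOn h (quad a b c) (Icc (-1) 1)) (ha : 2 * a = P) (h0 : 0 ≤ h 0) :
    EqOn h (steadyState P) (Icc (-1) 1) := by
  have hq₁ : h 1 = a + b + c := by rw [hq ⟨by norm_num, le_rfl⟩, quad]; ring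
  have hqm : h (-1) = a - b + c := by rw [hq ⟨le_rfl, by norm_num⟩, quad]; ring
  have hq₀ : h 0 = c := by rw [hq ⟨by norm_num, by norm_num⟩, quad]; ring
  have hb : b = 0 := by linarith [heven 1]
  have hP : P ≤ 2 := by linarith
  intro x hx
  rw [hq hx, steadyState, if_pos hP, quad]
  linear_combination (x ^ 2 - 1) / 2 * ha + (x - 1) * hb + h1 - hq₁

theorem eqOn_steadyState_of_eqOn_zero {P t : ℝ} {h : ℝ → ℝ} (heven : ∀ x, h (-x) = h x)
    (h1 : h 1 = 1) (ht0 : 0 ≤ t) (ht1 : t < 1) (hzero : EqOn h 0 (Icc 0 t))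
    (hq : ∀ y ∈ Icc t 1, h y = P / 2 * (y - t) ^ 2) : EqOn h (steadyState P) (Icc (-1) 1) := by
  have hone : P / 2 * (1 - t) ^ 2 = 1 := by rw [← hq 1 ⟨ht1.le, le_rfl⟩, h1]
  have hP : 2 ≤ P := by
    have hs : (1 - t) ^ 2 ≤ 1 := by nlinarith
    nlinarith [sq_pos_of_pos (sub_pos.2 ht1)]
  have ht : t = 1 - √(2 / P) := by
    rw [show 2 / P = (1 - t) ^ 2 by field_simp; linarith, Real.sqrt_sq (by linarith)]
    ring
  refine EqOn.Icc_neg_of_even heven (steadyState_neg P) fun x hx => ?_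
  rw [steadyState_of_two_le hP hx.1, ← ht]
  rcases le_total x t with hxt | htx
  · rw [hzero ⟨hx.1, hxt⟩, max_eq_right (by linarith)]
    simp
  · rw [hq x ⟨htx, hx.2⟩, max_eq_left (by linarith)]

theorem stmt14_general (P : ℝ) (h : ℝ → ℝ) (δ : ℝ) (hδ0 : 0 < δ)
    (heven : ∀ x, h (-x) = h x)
    (hbc : h 1 = 1)
    (hnn : ∀ x ∈ Set.Icc (-1:ℝ) 1, 0 ≤ h x)
    (hC1 : ContDiffOn ℝ 1 h (Set.Icc (-1) 1))
    (hP1 : iteratedDerivWithin 2 h (Set.Icc (1-δ) 1) 1 = P)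
    (hquad : ∀ x ∈ Set.Ioo (-1:ℝ) 1, 0 < h x →
      ∃ ε > 0, ∃ a b c : ℝ, ∀ y ∈ Set.Ioo (x-ε) (x+ε), h y = a*y^2 + b*y + c) :
    Set.EqOn h (fun x => if P ≤ 2 then P/2*(x^2-1)+1
      else P/2 * (max (|x| - (1 - Real.sqrt (2/P))) 0)^2) (Set.Icc (-1) 1) := by
  have hcont : ContinuousOn h (Icc (-1) 1) := hC1.continuousOn
  have hdiff : DifferentiableOn ℝ h (Ioo (-1) 1) :=
    (hC1.differentiableOn one_ne_zero).mono Ioo_subset_Icc_self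
  have hnn' : ∀ x ∈ Ioo (-1 : ℝ) 1, 0 ≤ h x := fun x hx => hnn x (Ioo_subset_Icc_self hx)
  have hloc : ∀ x ∈ Ioo (-1 : ℝ) 1, 0 < h x → IsLocallyQuadraticAt h x :=
    fun x hx hx0 => isLocallyQuadraticAt_of_forall_Ioo (hquad x hx hx0)
  have hlead : ∀ {t a b c : ℝ}, t < 1 → EqOn h (quad a b c) (Icc t 1) → 2 * a = P :=
    fun ht hq => hP1 ▸ (iteratedDerivWithin_two_Icc_eq_of_eqOn_quad hδ0 ht hq).symm
  set Z := Icc (-1 : ℝ) 1 ∩ h ⁻¹' {0}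
  have hZ : IsCompact Z := isCompact_Icc.of_isClosed_subset
    (hcont.preimage_isClosed_of_isClosed isClosed_Icc isClosed_singleton) inter_subset_left
  have hposZ : ∀ x ∈ Icc (-1 : ℝ) 1, x ∉ Z → 0 < h x :=
    fun x hx hxZ => (hnn x hx).lt_of_ne fun hx0 => hxZ ⟨hx, hx0.symm⟩
  rcases Z.eq_empty_or_nonempty with hZ0 | hZne
  · obtain ⟨a, b, c, hq⟩ := exists_eqOn_quad_Icc (by norm_num) hcont fun x hx =>
      hloc x hx (hposZ x (Ioo_subset_Icc_self hx) (hZ0 ▸ notMem_empty x))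
    exact eqOn_steadyState_of_eqOn_quad heven hbc hq (hlead (by norm_num) hq)
      (hnn 0 (by norm_num))
  obtain ⟨t, ⟨ht, ht0 : h t = 0⟩, htmax⟩ := hZ.exists_isGreatest hZne
  have hnt : 0 ≤ t := by
    have : -t ≤ t :=
      htmax ⟨⟨by linarith [ht.2], by linarith [ht.1]⟩, (heven t).trans ht0⟩
    linarith
  have ht1 : t < 1 := ht.2.lt_of_ne fun ht1 => one_ne_zero (hbc.symm.trans (ht1 ▸ ht0))
  obtain ⟨a, b, c, hq⟩ := exists_eqOn_quad_Icc ht1 (hcont.mono (Icc_subset_Icc_left ht.1))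
    fun x hx => hloc x ⟨by linarith [hx.1], hx.2⟩
      (hposZ x ⟨by linarith [hx.1], hx.2.le⟩ fun hxZ => (htmax hxZ).not_gt hx.1)
  have hroot : quad a b c t = 0 := (hq ⟨le_rfl, ht1.le⟩).symm.trans ht0
  have hcrit : 2 * a * t + b = 0 := two_mul_add_eq_zero_of_eqOn_quad isOpen_Ioo hnn' hdiff ht1 hq
    ⟨le_rfl, ht1.le⟩ ⟨by linarith, ht1⟩ ht0
  refine eqOn_steadyState_of_eqOn_zero heven hbc hnt ht1 ?_ fun y hy => ?_
  · refine (eqOn_zero_Icc_of_eq_zero isOpen_Ioo hnn' hdiff hloc ?_ (by rwa [heven]) ht0).mono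
      (Icc_subset_Icc_left (by linarith))
    exact Icc_subset_Ioo (by linarith) ht1
  · rw [hq hy, quad_eq_mul_sq_of_root hroot hcrit, ← hlead ht1 hq]
    ring

theorem stmt14 (P : ℝ) (hP : 0 < P) (h : ℝ → ℝ) (δ : ℝ) (hδ0 : 0 < δ) (hδ1 : δ < 1)
    (heven : ∀ x, h (-x) = h x)
    (hbc : h 1 = 1)
    (hnn : ∀ x ∈ Set.Icc (-1:ℝ) 1, 0 ≤ h x)
    (hC1 : ContDiffOn ℝ 1 h (Set.Icc (-1) 1))
    (hC2 : ContDiffOn ℝ 2 h (Set.Icc (1-δ) 1))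
    (hP1 : iteratedDerivWithin 2 h (Set.Icc (1-δ) 1) 1 = P)
    (hquad : ∀ x ∈ Set.Ioo (-1:ℝ) 1, 0 < h x →
      ∃ ε > 0, ∃ a b c : ℝ, ∀ y ∈ Set.Ioo (x-ε) (x+ε), h y = a*y^2 + b*y + c) :
    Set.EqOn h (fun x => if P ≤ 2 then P/2*(x^2-1)+1
      else P/2 * (max (|x| - (1 - Real.sqrt (2/P))) 0)^2) (Set.Icc (-1) 1) :=
  stmt14_general P h δ hδ0 heven hbc hnn hC1 hP1 hquad
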